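/- For the half-line quantum walk with coin parameter θ ≠ 0, π/2, π, 3π/2 and initial state (1/√2)|0⟩⊗(e^{-iθ}|0⟩ + i·e^{-iθ}|1⟩)·(normalized as stated), for every t ≥ 1 the probability of finding the walker at the rightmost reachable sites satisfies P(X_{2t}^{HL} = 2t) = P(X_{2t}^{HL} = 2t-1) = cos(θ)^{2(2t-1)}/2, and for every t ≥ 0, P(X_{2t+1}^{HL} = 2t+1) = P(X_{2t+1}^{HL} = 2t) = cos(θ)^{4t}/2. -/

import Mathlib

/-! The walker reaches the two rightmost sites only through the `β`-component: `α_t` vanishes at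
every `x ≥ t - 1`, so along both frontier diagonals the evolution reduces to `β ↦ -cos θ • β`.
After one step the initial phase `e^{-iθ}` cancels against `cos θ + i sin θ` and leaves
`β_1(0) = 1/√2`, `β_1(1) = -i/√2`; hence both frontier probabilities at time `t + 1` are
`cos θ ^ (2t) / 2`. -/

noncomputable def halfWalk (θ : ℝ) : ℕ → (ℕ → ℂ) × (ℕ → ℂ)
  | 0 =>
      (fun x => if x = 0 then Complex.exp (-(θ : ℂ) * Complex.I) / (Real.sqrt 2 : ℂ) else 0,
       fun x => if x = 0 then Complex.I * Complex.exp (-(θ : ℂ) * Complex.I) / (Real.sqrt 2 : ℂ) else 0)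
  | t + 1 =>
      (fun x => (Real.cos θ : ℂ) * (halfWalk θ t).1 (x + 1) + (Real.sin θ : ℂ) * (halfWalk θ t).2 (x + 1),
       fun x =>
         if x = 0 then (Real.cos θ : ℂ) * (halfWalk θ t).1 0 + (Real.sin θ : ℂ) * (halfWalk θ t).2 0
         else (Real.sin θ : ℂ) * (halfWalk θ t).1 (x - 1) - (Real.cos θ : ℂ) * (halfWalk θ t).2 (x - 1))

namespace halfWalk

variable (θ : ℝ)

noncomputable def prob (t x : ℕ) : ℝ :=
  ‖(halfWalk θ t).1 x‖ ^ 2 + ‖(halfWalk θ t).2 x‖ ^ 2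

theorem eq_zero_of_lt {t x : ℕ} (h : t < x) :
    (halfWalk θ t).1 x = 0 ∧ (halfWalk θ t).2 x = 0 := by
  induction t generalizing x with
  | zero => simp [halfWalk, Nat.pos_iff_ne_zero.mp h]
  | succ t ih =>
    obtain ⟨hα, hβ⟩ := ih (x := x + 1) (by omega)
    obtain ⟨hα', hβ'⟩ := ih (x := x - 1) (by omega)
    simp [halfWalk, hα, hβ, hα', hβ', Nat.pos_iff_ne_zero.mp (Nat.zero_lt_of_lt h)]

theorem succ_fst_eq_zero {t x : ℕ} (h : t ≤ x) : (halfWalk θ (t + 1)).1 x = 0 := by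
  obtain ⟨hα, hβ⟩ := eq_zero_of_lt θ (Nat.lt_succ_of_le h)
  simp [halfWalk, hα, hβ]

theorem succ_snd_succ (t x : ℕ) :
    (halfWalk θ (t + 1)).2 (x + 1)
      = Real.sin θ * (halfWalk θ t).1 x - Real.cos θ * (halfWalk θ t).2 x := by
  simp [halfWalk]

theorem one_snd_zero : (halfWalk θ 1).2 0 = 1 / Real.sqrt 2 := by
  have hphase : Complex.exp (-(θ : ℂ) * Complex.I) * (Real.cos θ + Real.sin θ * Complex.I) = 1 := by
    push_cast
    rw [← Complex.exp_mul_I, ← Complex.exp_add]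
    simp
  simp only [halfWalk, if_true]
  linear_combination hphase / (Real.sqrt 2 : ℂ)

theorem one_snd_one : (halfWalk θ 1).2 1 = -Complex.I / Real.sqrt 2 := by
  have h : (halfWalk θ 1).2 1 = -Complex.I * (halfWalk θ 1).2 0 := by
    rw [succ_snd_succ]
    simp only [halfWalk, if_true]
    linear_combination
      (Real.sin θ * Complex.exp (-(θ : ℂ) * Complex.I) / (Real.sqrt 2 : ℂ)) * Complex.I_sq
  rw [h, one_snd_zero]
  ring

theorem snd_frontier (t : ℕ) :
    (halfWalk θ (t + 1)).2 (t + 1) = (-Real.cos θ) ^ t * (halfWalk θ 1).2 1 ∧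
      (halfWalk θ (t + 1)).2 t = (-Real.cos θ) ^ t * (halfWalk θ 1).2 0 := by
  induction t with
  | zero => simp
  | succ t ih =>
    rw [succ_snd_succ θ (t + 1) (t + 1), succ_snd_succ θ (t + 1) t, succ_fst_eq_zero θ le_rfl,
      succ_fst_eq_zero θ (Nat.le_succ t), ih.1, ih.2]
    constructor <;> ring

theorem prob_frontier (t : ℕ) :
    prob θ (t + 1) (t + 1) = Real.cos θ ^ (2 * t) / 2 ∧
      prob θ (t + 1) t = Real.cos θ ^ (2 * t) / 2 := by
  have hnorm (z : ℂ) (hz : ‖z‖ = 1) :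
      ‖(-(Real.cos θ : ℂ)) ^ t * (z / Real.sqrt 2)‖ ^ 2 = Real.cos θ ^ (2 * t) / 2 := by
    rw [norm_mul, norm_div, hz, norm_pow, norm_neg, Complex.norm_real, Complex.norm_real,
      Real.norm_eq_abs, Real.norm_of_nonneg (Real.sqrt_nonneg 2), mul_pow, div_pow, ← pow_mul,
      pow_mul', sq_abs, Real.sq_sqrt zero_le_two, pow_mul]
    ring
  obtain ⟨hfar, hnear⟩ := snd_frontier θ t
  refine ⟨?_, ?_⟩
  · rw [prob, succ_fst_eq_zero θ (Nat.le_succ t), hfar, one_snd_one]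
    simpa using hnorm (-Complex.I) (by simp)
  · rw [prob, succ_fst_eq_zero θ le_rfl, hnear, one_snd_zero]
    simpa using hnorm 1 (by simp)

end halfWalk

theorem half_line_rightmost_probability_general (θ : ℝ) :
    (∀ t : ℕ, 1 ≤ t →
        ‖(halfWalk θ (2 * t)).1 (2 * t)‖ ^ 2
            + ‖(halfWalk θ (2 * t)).2 (2 * t)‖ ^ 2
          = Real.cos θ ^ (2 * (2 * t - 1)) / 2 ∧
        ‖(halfWalk θ (2 * t)).1 (2 * t - 1)‖ ^ 2
            + ‖(halfWalk θ (2 * t)).2 (2 * t - 1)‖ ^ 2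
          = Real.cos θ ^ (2 * (2 * t - 1)) / 2) ∧
    (∀ t : ℕ,
        ‖(halfWalk θ (2 * t + 1)).1 (2 * t + 1)‖ ^ 2
            + ‖(halfWalk θ (2 * t + 1)).2 (2 * t + 1)‖ ^ 2
          = Real.cos θ ^ (4 * t) / 2 ∧
        ‖(halfWalk θ (2 * t + 1)).1 (2 * t)‖ ^ 2
            + ‖(halfWalk θ (2 * t + 1)).2 (2 * t)‖ ^ 2
          = Real.cos θ ^ (4 * t) / 2) := by
  refine ⟨fun t ht => ?_, fun t => ?_⟩
  · obtain ⟨s, hs⟩ : ∃ s, 2 * t = s + 1 := ⟨2 * t - 1, by omega⟩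
    rw [hs, Nat.add_sub_cancel]
    exact halfWalk.prob_frontier θ s
  · rw [show 4 * t = 2 * (2 * t) by ring]
    exact halfWalk.prob_frontier θ (2 * t)

theorem half_line_rightmost_probability (θ : ℝ) (hθ : θ ∈ Set.Ico 0 (2 * Real.pi))
    (h0 : θ ≠ 0) (h1 : θ ≠ Real.pi / 2) (h2 : θ ≠ Real.pi) (h3 : θ ≠ 3 * Real.pi / 2) :
    (∀ t : ℕ, 1 ≤ t →
        ‖(halfWalk θ (2 * t)).1 (2 * t)‖ ^ 2
            + ‖(halfWalk θ (2 * t)).2 (2 * t)‖ ^ 2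
          = Real.cos θ ^ (2 * (2 * t - 1)) / 2 ∧
        ‖(halfWalk θ (2 * t)).1 (2 * t - 1)‖ ^ 2
            + ‖(halfWalk θ (2 * t)).2 (2 * t - 1)‖ ^ 2
          = Real.cos θ ^ (2 * (2 * t - 1)) / 2) ∧
    (∀ t : ℕ,
        ‖(halfWalk θ (2 * t + 1)).1 (2 * t + 1)‖ ^ 2
            + ‖(halfWalk θ (2 * t + 1)).2 (2 * t + 1)‖ ^ 2
          = Real.cos θ ^ (4 * t) / 2 ∧
        ‖(halfWalk θ (2 * t + 1)).1 (2 * t)‖ ^ 2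
            + ‖(halfWalk θ (2 * t + 1)).2 (2 * t)‖ ^ 2
          = Real.cos θ ^ (4 * t) / 2) :=
  half_line_rightmost_probability_general θ
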